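/- arXiv:1303.2899 — 2 statements merged into one kernel-verified Lean document; each statement's English description precedes it below -/
import Mathlib

section
/- Let T be a symmetric bilinear form on Minkowski space V = ℝ^(1+d) such that T(k,k) > 0 for every non-vanishing null vector k. Then there exists a timelike vector k* and a real number λ such that T(k*, ·) = -λ g(k*, ·). -/
noncomputable section

/-- The Minkowski bilinear form on `ℝ^(1+d)`, written as `ℝ × (Fin d → ℝ)`. -/
def mink (d : ℕ) (x y : ℝ × (Fin d → ℝ)) : ℝ :=
  -(x.1 * y.1) + ∑ i, x.2 i * y.2 i

/-! Minimise the Rayleigh quotient `R k = T k k / -g k k` over the timelike cone. `R` is invariant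
under scaling, so it suffices to minimise over the slice `k.1 = 1`, where the sublevel set
`{R ≤ R (1, 0)}` is compact: positivity of `T` on null vectors keeps it away from the null cone.
At a minimiser `k`, with `λ = R k`, the quadratic form of `T + λ g` is nonnegative on the open
timelike cone and vanishes at `k`, so its polar form vanishes at `k`: `T k · = -λ g k ·`. -/

namespace LinearMap

variable {E : Type*} [AddCommGroup E] [Module ℝ E]

lemma apply_add_smul_self (B : E →ₗ[ℝ] E →ₗ[ℝ] ℝ) (hB : ∀ u v, B u v = B v u) (k v : E) (t : ℝ) :
    B (k + t • v) (k + t • v) = B k k + 2 * B k v * t + B v v * t ^ 2 := by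
  simp only [map_add, map_smul, add_apply, smul_apply, smul_eq_mul, hB v k]
  ring

lemma apply_eq_zero_of_isLocalMin (B : E →ₗ[ℝ] E →ₗ[ℝ] ℝ) (hB : ∀ u v, B u v = B v u) {k v : E}
    (hmin : IsLocalMin (fun t : ℝ => B (k + t • v) (k + t • v)) 0) : B k v = 0 := by
  have hderiv : HasDerivAt (fun t : ℝ => B k k + 2 * B k v * t + B v v * t ^ 2) (2 * B k v) 0 := by
    simpa using (((hasDerivAt_id (0 : ℝ)).const_mul (2 * B k v)).const_add (B k k)).fun_add
      ((hasDerivAt_pow 2 (0 : ℝ)).const_mul (B v v))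
  simp only [B.apply_add_smul_self hB] at hmin
  linarith [hmin.hasDerivAt_eq_zero hderiv]

lemma apply_eq_zero_of_isMinOn [TopologicalSpace E] [ContinuousAdd E] [ContinuousSMul ℝ E]
    (B : E →ₗ[ℝ] E →ₗ[ℝ] ℝ) (hB : ∀ u v, B u v = B v u) {U : Set E} (hU : IsOpen U) {k : E}
    (hk : k ∈ U) (hmin : IsMinOn (fun v => B v v) U k) (v : E) : B k v = 0 := by
  have hlocal : IsLocalMin (fun v => B v v) (k + (0 : ℝ) • v) := by
    simpa using hmin.isLocalMin (hU.mem_nhds hk)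
  exact B.apply_eq_zero_of_isLocalMin hB <|
    hlocal.comp_continuous (g := fun t : ℝ => k + t • v) (by fun_prop)

end LinearMap

lemma LinearMap.continuous_apply_self {E : Type*} [NormedAddCommGroup E] [NormedSpace ℝ E]
    [FiniteDimensional ℝ E] (B : E →ₗ[ℝ] E →ₗ[ℝ] ℝ) : Continuous fun k => B k k :=
  B.toContinuousBilinearMap.continuous₂.comp (continuous_id.prodMk continuous_id)

section Minkowski

variable {d : ℕ}

variable (d) in
def minkForm : LinearMap.BilinForm ℝ (ℝ × (Fin d → ℝ)) :=
  LinearMap.mk₂ ℝ (mink d)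
    (fun x x' y => by simp only [mink, Prod.fst_add, Prod.snd_add, Pi.add_apply, add_mul,
      Finset.sum_add_distrib]; ring)
    (fun c x y => by simp only [mink, Prod.smul_fst, Prod.smul_snd, Pi.smul_apply, smul_eq_mul,
      mul_add, mul_neg, Finset.mul_sum, mul_assoc])
    (fun x y y' => by simp only [mink, Prod.fst_add, Prod.snd_add, Pi.add_apply, mul_add,
      Finset.sum_add_distrib]; ring)
    (fun c x y => by simp only [mink, Prod.smul_fst, Prod.smul_snd, Pi.smul_apply, smul_eq_mul,
      mul_add, mul_neg, Finset.mul_sum, mul_left_comm c])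

@[simp]
lemma minkForm_apply (x y : ℝ × (Fin d → ℝ)) : minkForm d x y = mink d x y := rfl

lemma mink_comm (x y : ℝ × (Fin d → ℝ)) : mink d x y = mink d y x := by
  simp only [mink, mul_comm]

lemma mink_smul_self (c : ℝ) (k : ℝ × (Fin d → ℝ)) :
    mink d (c • k) (c • k) = c ^ 2 * mink d k k := by
  simp only [← minkForm_apply, map_smul, LinearMap.smul_apply, smul_eq_mul]
  ring

variable (d) in
lemma continuous_mink_self : Continuous fun k : ℝ × (Fin d → ℝ) => mink d k k :=
  (minkForm d).continuous_apply_self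

variable (d) in
lemma isOpen_setOf_mink_self_neg : IsOpen {k : ℝ × (Fin d → ℝ) | mink d k k < 0} :=
  isOpen_lt (continuous_mink_self d) continuous_const

lemma fst_ne_zero_of_mink_self_neg {k : ℝ × (Fin d → ℝ)} (hk : mink d k k < 0) : k.1 ≠ 0 := by
  intro h
  simp only [mink, h, zero_mul, neg_zero, zero_add] at hk
  exact hk.not_ge (Finset.sum_nonneg fun i _ => mul_self_nonneg (k.2 i))

lemma norm_le_one_of_mink_self_nonpos {k : ℝ × (Fin d → ℝ)} (h1 : k.1 = 1)
    (hk : mink d k k ≤ 0) : ‖k‖ ≤ 1 := by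
  refine norm_prod_le_iff.2 ⟨by simp [h1], (pi_norm_le_iff_of_nonneg zero_le_one).2 fun i => ?_⟩
  have hi : k.2 i * k.2 i ≤ ∑ j, k.2 j * k.2 j :=
    Finset.single_le_sum (fun j _ => mul_self_nonneg (k.2 j)) (Finset.mem_univ i)
  simp only [mink, h1, mul_one] at hk
  simpa [Real.norm_eq_abs] using abs_le_one_iff_mul_self_le_one.2 (by linarith)

end Minkowski

section Rayleigh

variable {d : ℕ} (T : (ℝ × (Fin d → ℝ)) →ₗ[ℝ] (ℝ × (Fin d → ℝ)) →ₗ[ℝ] ℝ)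

def rayleigh (k : ℝ × (Fin d → ℝ)) : ℝ :=
  T k k / -mink d k k

lemma rayleigh_smul {c : ℝ} (hc : c ≠ 0) (k : ℝ × (Fin d → ℝ)) :
    rayleigh T (c • k) = rayleigh T k := by
  simp only [rayleigh, mink_smul_self, map_smul, LinearMap.smul_apply, smul_eq_mul, ← mul_assoc,
    ← mul_neg, ← pow_two]
  exact mul_div_mul_left _ _ (pow_ne_zero 2 hc)

lemma exists_isMinOn_rayleigh_of_fst_eq_one (hnull : ∀ k, k ≠ 0 → mink d k k = 0 → 0 < T k k) :
    ∃ k, k.1 = 1 ∧ mink d k k < 0 ∧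
      IsMinOn (rayleigh T) {u | u.1 = 1 ∧ mink d u u < 0} k := by
  set e₀ : ℝ × (Fin d → ℝ) := (1, 0)
  have he₀ : mink d e₀ e₀ = -1 := by simp [mink, e₀]
  -- the sublevel set `{R ≤ R e₀}` of the slice, cleared of denominators so that it is closed
  set K := {k : ℝ × (Fin d → ℝ) | k.1 = 1 ∧ mink d k k ≤ 0 ∧ T k k ≤ T e₀ e₀ * -mink d k k}
  have hK_timelike : ∀ k ∈ K, mink d k k < 0 := by
    rintro k ⟨h1, hle, hT⟩
    refine hle.lt_of_ne fun h0 => ?_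
    have hk0 : k ≠ 0 := fun h => by simp [h] at h1
    rw [h0, neg_zero, mul_zero] at hT
    exact hT.not_gt (hnull k hk0 h0)
  have hK_closed : IsClosed K :=
    (isClosed_eq continuous_fst continuous_const).inter <|
      (isClosed_le (continuous_mink_self d) continuous_const).inter <|
        isClosed_le T.continuous_apply_self (continuous_const.mul (continuous_mink_self d).neg)
  have hK_compact : IsCompact K :=
    (isCompact_closedBall 0 1).of_isClosed_subset hK_closed fun k hk =>
      mem_closedBall_zero_iff.2 (norm_le_one_of_mink_self_nonpos hk.1 hk.2.1)
  have he₀K : e₀ ∈ K := ⟨rfl, by rw [he₀]; norm_num, by rw [he₀, neg_neg, mul_one]⟩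
  have hcont : ContinuousOn (rayleigh T) K :=
    T.continuous_apply_self.continuousOn.div (continuous_mink_self d).neg.continuousOn
      fun k hk => neg_ne_zero.2 (hK_timelike k hk).ne
  obtain ⟨k, hkK, hmin⟩ := hK_compact.exists_isMinOn ⟨e₀, he₀K⟩ hcont
  refine ⟨k, hkK.1, hK_timelike k hkK, fun u ⟨hu1, hu⟩ => ?_⟩
  by_cases huK : u ∈ K
  · exact hmin huK
  · have hlt : rayleigh T e₀ < rayleigh T u := by
      rw [rayleigh, he₀, neg_neg, div_one, rayleigh, lt_div_iff₀ (neg_pos.2 hu)]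
      exact not_le.1 fun h => huK ⟨hu1, hu.le, h⟩
    exact (hmin he₀K).trans hlt.le

lemma exists_isMinOn_rayleigh (hnull : ∀ k, k ≠ 0 → mink d k k = 0 → 0 < T k k) :
    ∃ k, mink d k k < 0 ∧ IsMinOn (rayleigh T) {v | mink d v v < 0} k := by
  obtain ⟨k, -, hk, hmin⟩ := exists_isMinOn_rayleigh_of_fst_eq_one T hnull
  refine ⟨k, hk, fun v hv => ?_⟩
  have hv1 : v.1 ≠ 0 := fst_ne_zero_of_mink_self_neg hv
  have hu : (v.1⁻¹ • v).1 = 1 ∧ mink d (v.1⁻¹ • v) (v.1⁻¹ • v) < 0 := by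
    refine ⟨by simp [hv1], ?_⟩
    rw [mink_smul_self]
    exact mul_neg_of_pos_of_neg (by positivity) hv
  calc rayleigh T k ≤ rayleigh T (v.1⁻¹ • v) := hmin hu
    _ = rayleigh T v := rayleigh_smul T (inv_ne_zero hv1) v

end Rayleigh

/-- If a symmetric bilinear form `T` on Minkowski space satisfies `T(k,k) > 0` for every
non-vanishing null vector `k`, then there is a timelike vector `k*` and `λ ∈ ℝ` with
`T(k*,·) = -λ g(k*,·)`. -/
theorem exists_timelike_eigenvector (d : ℕ)
    (T : (ℝ × (Fin d → ℝ)) →ₗ[ℝ] (ℝ × (Fin d → ℝ)) →ₗ[ℝ] ℝ)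
    (hsymm : ∀ u v, T u v = T v u)
    (hnull : ∀ k, k ≠ 0 → mink d k k = 0 → 0 < T k k) :
    ∃ (k : ℝ × (Fin d → ℝ)) (lam : ℝ), mink d k k < 0 ∧
      ∀ v, T k v = -(lam * mink d k v) := by
  obtain ⟨k, hk, hmin⟩ := exists_isMinOn_rayleigh T hnull
  set lam := rayleigh T k
  set B := T + lam • minkForm d
  have hB : ∀ u v, B u v = T u v + lam * mink d u v := fun _ _ => rfl
  have hBsymm : ∀ u v, B u v = B v u := fun u v => by rw [hB, hB, hsymm, mink_comm]
  have hBk : B k k = 0 := by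
    have hlam : lam * -mink d k k = T k k := div_mul_cancel₀ _ (neg_ne_zero.2 hk.ne)
    rw [hB]
    linarith
  have hBmin : IsMinOn (fun v => B v v) {v | mink d v v < 0} k := fun v hv => by
    have hlam : lam * -mink d v v ≤ T v v := (le_div_iff₀ (neg_pos.2 hv)).1 (hmin hv)
    change B k k ≤ B v v
    rw [hBk, hB]
    linarith
  refine ⟨k, lam, hk, fun v => ?_⟩
  have hBkv := B.apply_eq_zero_of_isMinOn hBsymm (isOpen_setOf_mink_self_neg d) hk hBmin v
  rw [hB] at hBkv
  linarith
end
end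

section
/- Let f: ℝ^d → ℝ be a nonnegative, continuous, compactly supported function, not identically zero, and m > 0. Define γ(p) = √(1 + |p|²/m²), ε = ∫ mγ(p) f(p) dp, ρ = m ∫ f(p) dp, and P = (1/d)∫ m (|p|²/(m²γ(p))) f(p) dp. Then ρ² ≤ ε(ε - dP), i.e., ε ≥ (d/2)P + √((dP/2)² + ρ²). -/
noncomputable section
open MeasureTheory

/-- Lorentz factor `γ(p) = √(1 + |p|²/m²)` on momentum space `ℝ^d`. -/
def gam (d : ℕ) (m : ℝ) (p : Fin d → ℝ) : ℝ :=
  Real.sqrt (1 + (∑ i, p i ^ 2) / m ^ 2)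

/-- Energy density `ε = ∫ mγ(p) f(p) dp`. -/
def eps (d : ℕ) (m : ℝ) (f : (Fin d → ℝ) → ℝ) : ℝ :=
  ∫ p, m * gam d m p * f p

/-- Rest mass density `ρ = m ∫ f(p) dp`. -/
def rho (d : ℕ) (m : ℝ) (f : (Fin d → ℝ) → ℝ) : ℝ :=
  m * ∫ p, f p

/-- Mean kinetic pressure `P = (1/d) ∫ m (|p|²/(m²γ(p))) f(p) dp`. -/
def prs (d : ℕ) (m : ℝ) (f : (Fin d → ℝ) → ℝ) : ℝ :=
  (1 / (d : ℝ)) * ∫ p, m * ((∑ i, p i ^ 2) / (m ^ 2 * gam d m p)) * f p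

/-!
Since `γ - |v|²γ = γ⁻¹`, the combination `ε - dP = ∫ mγ⁻¹ f` is again an integral against the
weight `m f ≥ 0`, and `ρ² ≤ ε (ε - dP)` is Cauchy–Schwarz for `γ^{1/2}` and `γ^{-1/2}` against
that weight, proved through the nonnegative quadratic `t ↦ ∫ (tγ + 1)² γ⁻¹ m f`. The second form
follows because `ε` and `ε - dP` are nonnegative with product at least `ρ²`, so their mean
dominates `√((dP/2)² + ρ²)`.
-/

theorem sq_integral_le_integral_mul_integral_inv_mul {α : Type*} [MeasurableSpace α]
    {μ : Measure α} {w γ : α → ℝ} (hw : 0 ≤ᵐ[μ] w) (hγ : ∀ᵐ x ∂μ, 0 < γ x)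
    (hw_int : Integrable w μ) (hγw_int : Integrable (fun x => γ x * w x) μ)
    (hγw_int' : Integrable (fun x => (γ x)⁻¹ * w x) μ) :
    (∫ x, w x ∂μ) ^ 2 ≤ (∫ x, γ x * w x ∂μ) * ∫ x, (γ x)⁻¹ * w x ∂μ := by
  set A := ∫ x, γ x * w x ∂μ
  set B := ∫ x, w x ∂μ
  set C := ∫ x, (γ x)⁻¹ * w x ∂μ
  have hquad : ∀ t : ℝ, 0 ≤ A * (t * t) + 2 * B * t + C := by
    intro t
    have hexpand : A * (t * t) + 2 * B * t + C =
        ∫ x, t * t * (γ x * w x) + 2 * t * w x + (γ x)⁻¹ * w x ∂μ := by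
      have hlin : Integrable (fun x => t * t * (γ x * w x) + 2 * t * w x) μ :=
        (hγw_int.const_mul _).add (hw_int.const_mul _)
      rw [integral_add hlin hγw_int', integral_add (hγw_int.const_mul _) (hw_int.const_mul _),
        integral_const_mul, integral_const_mul]
      ring
    rw [hexpand]
    refine integral_nonneg_of_ae ?_
    filter_upwards [hw, hγ] with x hwx hγx
    have hsq : t * t * (γ x * w x) + 2 * t * w x + (γ x)⁻¹ * w x
        = (t * γ x + 1) ^ 2 * (γ x)⁻¹ * w x := by
      field_simp
      ring
    rw [hsq]
    exact mul_nonneg (mul_nonneg (sq_nonneg _) (inv_nonneg.2 hγx.le)) hwx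
  have hdisc := discrim_le_zero hquad
  rw [discrim] at hdisc
  nlinarith

theorem half_sub_add_sqrt_le_of_sq_le_mul {A B C : ℝ} (hA : 0 ≤ A) (hC : 0 ≤ C)
    (hB : B ^ 2 ≤ A * C) : (A - C) / 2 + Real.sqrt (((A - C) / 2) ^ 2 + B ^ 2) ≤ A := by
  have hsqrt : Real.sqrt (((A - C) / 2) ^ 2 + B ^ 2) ≤ (A + C) / 2 :=
    Real.sqrt_le_iff.2 ⟨by positivity, by nlinarith⟩
  linarith

section Kinetic

variable {d : ℕ} {m : ℝ}

theorem gam_pos (p : Fin d → ℝ) : 0 < gam d m p :=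
  Real.sqrt_pos.2 (by positivity)

theorem continuous_gam : Continuous (gam d m) := by
  unfold gam
  fun_prop

/-- `|v|² γ = γ - γ⁻¹`, from `γ² = 1 + |p|²/m²`. -/
theorem sum_sq_div_sq_mul_gam (hm : m ≠ 0) (p : Fin d → ℝ) :
    (∑ i, p i ^ 2) / (m ^ 2 * gam d m p) = gam d m p - (gam d m p)⁻¹ := by
  have hγ := (gam_pos (m := m) p).ne'
  have hγsq : gam d m p ^ 2 = 1 + (∑ i, p i ^ 2) / m ^ 2 :=
    Real.sq_sqrt (by positivity)
  field_simp
  rw [hγsq]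
  field_simp
  ring

theorem natCast_mul_prs (f : (Fin d → ℝ) → ℝ) :
    (d : ℝ) * prs d m f = ∫ p, m * ((∑ i, p i ^ 2) / (m ^ 2 * gam d m p)) * f p := by
  rcases Nat.eq_zero_or_pos d with rfl | hd
  · simp [prs]
  · rw [prs, ← mul_assoc, mul_one_div_cancel (by positivity), one_mul]

theorem eps_sub_natCast_mul_prs (hm : m ≠ 0) {f : (Fin d → ℝ) → ℝ} (hf : Continuous f)
    (hsupp : HasCompactSupport f) :
    eps d m f - d * prs d m f = ∫ p, (gam d m p)⁻¹ * (m * f p) := by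
  have hγ : Continuous (gam d m) := continuous_gam
  have hint {g : (Fin d → ℝ) → ℝ} (hg : Continuous g) : Integrable (fun p => g p * f p) :=
    (hg.mul hf).integrable_of_hasCompactSupport hsupp.mul_left
  rw [eps, natCast_mul_prs, ← integral_sub (hint (by fun_prop))
    (hint (by fun_prop (disch := exact fun p => mul_ne_zero (pow_ne_zero 2 hm) (gam_pos p).ne')))]
  congr 1 with p
  rw [sum_sq_div_sq_mul_gam hm]
  ring

end Kinetic

theorem energy_density_lower_bound_general (d : ℕ) (m : ℝ) (hm : 0 < m)
    (f : (Fin d → ℝ) → ℝ) (hcont : Continuous f) (hsupp : HasCompactSupport f)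
    (hnonneg : ∀ p, 0 ≤ f p) :
    rho d m f ^ 2 ≤ eps d m f * (eps d m f - d * prs d m f) ∧
    ((d : ℝ) / 2) * prs d m f +
        Real.sqrt (((d : ℝ) * prs d m f / 2) ^ 2 + rho d m f ^ 2) ≤ eps d m f := by
  have hw : ∀ p, 0 ≤ m * f p := fun p => mul_nonneg hm.le (hnonneg p)
  have hint {g : (Fin d → ℝ) → ℝ} (hg : Continuous g) :
      Integrable (fun p => g p * (m * f p)) :=
    (hg.mul (continuous_const.mul hcont)).integrable_of_hasCompactSupport hsupp.mul_left.mul_left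
  have heps : eps d m f = ∫ p, gam d m p * (m * f p) := by
    unfold eps
    congr 1 with p
    ring
  have hrho : rho d m f = ∫ p, m * f p := (integral_const_mul m f).symm
  have hC := eps_sub_natCast_mul_prs hm.ne' hcont hsupp
  have hCS : rho d m f ^ 2 ≤ eps d m f * (eps d m f - d * prs d m f) := by
    rw [hC, heps, hrho]
    exact sq_integral_le_integral_mul_integral_inv_mul (.of_forall hw) (.of_forall gam_pos)
      (by simpa using hint (g := fun _ => 1) continuous_const) (hint continuous_gam)
      (hint (continuous_gam.inv₀ fun p => (gam_pos p).ne'))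
  have heps_nonneg : 0 ≤ eps d m f := by
    rw [heps]
    exact integral_nonneg fun p => mul_nonneg (gam_pos p).le (hw p)
  have hC_nonneg : 0 ≤ eps d m f - d * prs d m f := by
    rw [hC]
    exact integral_nonneg fun p => mul_nonneg (inv_nonneg.2 (gam_pos p).le) (hw p)
  refine ⟨hCS, ?_⟩
  have hbound := half_sub_add_sqrt_le_of_sq_le_mul heps_nonneg hC_nonneg hCS
  rw [sub_sub_cancel] at hbound
  rwa [div_mul_eq_mul_div]

/-- For a nonnegative continuous compactly supported distribution function `f ≠ 0`,
the energy density, rest mass density and mean kinetic pressure satisfy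
`ρ² ≤ ε(ε - dP)`, i.e. `ε ≥ (d/2)P + √((dP/2)² + ρ²)`. -/
theorem energy_density_lower_bound (d : ℕ) (hd : 0 < d) (m : ℝ) (hm : 0 < m)
    (f : (Fin d → ℝ) → ℝ) (hcont : Continuous f) (hsupp : HasCompactSupport f)
    (hnonneg : ∀ p, 0 ≤ f p) (hne : ∃ p, f p ≠ 0) :
    rho d m f ^ 2 ≤ eps d m f * (eps d m f - d * prs d m f) ∧
    ((d : ℝ) / 2) * prs d m f +
        Real.sqrt (((d : ℝ) * prs d m f / 2) ^ 2 + rho d m f ^ 2) ≤ eps d m f :=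
  energy_density_lower_bound_general d m hm f hcont hsupp hnonneg
end
end
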